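/- Injectivity on completely reduced monomials: with M closed under comparability and Ψ: K[T_{ij} : u_{ij} ∈ M] → K[x,t] defined by Ψ(T_{ij}) = u_{ij} t_i (t_0 = 1), if m and m' are completely reduced monomials with Ψ(m) = Ψ(m'), then m = m'. Consequently the images under Ψ of the completely reduced monomials are linearly independent over K. -/

import Mathlib

/-! Multi-Rees setup.  Monomials in `K[X_1,…,X_n]` are multisets of variable
indices (index `a` ↔ `X_{a+1}`; smaller index = larger variable).  Levels are
`i : Fin (s+1)`, level `0` corresponding to the maximal ideal `I_0`; `U i j` is
the monomial `u_{ij}` and a monomial of `K[T_{ij}]` is a multiset of `T`-variables,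
i.e. a multiset of pairs `⟨i, j⟩`. -/

def stdList (m : Multiset ℕ) : List ℕ := m.sort (· ≤ ·)

def evens (l : List ℕ) : List ℕ := (((List.range l.length).zip l).filter fun p => p.1 % 2 == 0).map Prod.snd

def odds (l : List ℕ) : List ℕ := (((List.range l.length).zip l).filter fun p => p.1 % 2 == 1).map Prod.snd

/-- `sort(u,v)` of two equal-degree monomials. -/
def sortPair (u v : Multiset ℕ) : Multiset ℕ × Multiset ℕ :=
  (((evens (stdList (u + v)) : List ℕ) : Multiset ℕ),
   ((odds (stdList (u + v)) : List ℕ) : Multiset ℕ))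

/-- `ord(u,v)` for `deg u ≤ deg v`. -/
def ordPair (u v : Multiset ℕ) : Multiset ℕ × Multiset ℕ :=
  ((((stdList (u + v)).drop (Multiset.card v) : List ℕ) : Multiset ℕ),
   (((stdList (u + v)).take (Multiset.card v) : List ℕ) : Multiset ℕ))

/-- Graded reverse-lex `u >_rev v` for equal-degree monomials. -/
def revGtM (u v : Multiset ℕ) : Prop :=
  ∃ k, (stdList u).getD k 0 < (stdList v).getD k 0 ∧
    ∀ k', k < k' → (stdList u).getD k' 0 = (stdList v).getD k' 0

/-- The type of `T`-variables `T_{ij}`. -/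
def TVar (s : ℕ) (ni : Fin (s + 1) → ℕ) : Type := (i : Fin (s + 1)) × Fin (ni i)

instance (s : ℕ) (ni : Fin (s + 1) → ℕ) : DecidableEq (TVar s ni) := by
  unfold TVar; infer_instance

/-- Number of pairs `(y ∈ a, y' ∈ b)` (with multiplicity) such that the variable
occurrence `y'` is a strictly smaller variable than `y`, i.e. has strictly larger
index. -/
def crossCount (a b : Multiset ℕ) : ℕ :=
  (a.map fun y => Multiset.card (b.filter fun y' => y < y')).sum

/-- The comparability number `c_m`: the number of pairs of variable occurrences
(`Y` at level `i`, `Y'` at level `i' > i`) with `Y' < Y`. -/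
def cNum {s : ℕ} {ni : Fin (s + 1) → ℕ} (U : (i : Fin (s + 1)) → Fin (ni i) → Multiset ℕ)
    (m : Multiset (TVar s ni)) : ℕ :=
  (m.map fun T => (m.map fun T' =>
    if T.1 < T'.1 then crossCount (U T.1 T.2) (U T'.1 T'.2) else 0).sum).sum

/-- Column-major lex order on positions `(row, col)` of a matrix. -/
def posLtN (p q : ℕ × ℕ) : Prop := p.2 < q.2 ∨ (p.2 = q.2 ∧ p.1 < q.1)

instance : DecidableRel posLtN := fun _ _ => by unfold posLtN; infer_instance

def entryL (rows : List (List ℕ)) (j k : ℕ) : ℕ := (rows.getD j []).getD k 0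

/-- Number of inversions of the matrix whose rows (of common length `dcol`) are
the members of `rows`. -/
def invRowsL (dcol : ℕ) (rows : List (List ℕ)) : ℕ :=
  (Finset.filter (fun p : (ℕ × ℕ) × (ℕ × ℕ) =>
      posLtN p.1 p.2 ∧ entryL rows p.1.1 p.1.2 < entryL rows p.2.1 p.2.2)
    ((Finset.range rows.length ×ˢ Finset.range dcol) ×ˢ
      (Finset.range rows.length ×ˢ Finset.range dcol))).card

/-- `e_{m,i}` computed over inversion-minimal matrices: the minimum, over all
orderings of the given multiset of rows, of the inversion number. -/
noncomputable def eLevel (dcol : ℕ) (lvl : Multiset (List ℕ)) : ℕ :=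
  sInf { e | ∃ rows : List (List ℕ), (rows : Multiset (List ℕ)) = lvl ∧ invRowsL dcol rows = e }

/-- The total number of inversions `e_m = Σ_i e_{m,i}`. -/
noncomputable def eNum {s : ℕ} {ni : Fin (s + 1) → ℕ} (U : (i : Fin (s + 1)) → Fin (ni i) → Multiset ℕ)
    (d : Fin (s + 1) → ℕ) (m : Multiset (TVar s ni)) : ℕ :=
  ∑ i : Fin (s + 1), eLevel (d i)
    ((m.filter fun T => T.1 = i).map fun T => stdList (U T.1 T.2))

/-- Comparability `u_{ij} ≺ u_{i'j'}`: either `i < i'` and `ord` fixes the pair, or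
`i = i'` and `sort` fixes the pair. -/
def prec {s : ℕ} {ni : Fin (s + 1) → ℕ} (U : (i : Fin (s + 1)) → Fin (ni i) → Multiset ℕ)
    (a b : TVar s ni) : Prop :=
  (a.1 < b.1 ∧ ordPair (U a.1 a.2) (U b.1 b.2) = (U a.1 a.2, U b.1 b.2)) ∨
  (a.1 = b.1 ∧ sortPair (U a.1 a.2) (U b.1 b.2) = (U a.1 a.2, U b.1 b.2))


/-- The image `Ψ(T_{ij}) = u_{ij} t_i` (with `t_0 = 1`) as a monomial of
`K[X_1,…,X_n, t_1,…,t_s]`, realized in `MvPolynomial (ℕ ⊕ Fin (s+1)) K`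
(`Sum.inl a` is the variable `X_{a+1}`, `Sum.inr i` is `t_i`). -/
noncomputable def PsiT {s : ℕ} {ni : Fin (s + 1) → ℕ} (K : Type*) [Field K]
    (U : (i : Fin (s + 1)) → Fin (ni i) → Multiset ℕ) (T : TVar s ni) :
    MvPolynomial (ℕ ⊕ Fin (s + 1)) K :=
  ((U T.1 T.2).map fun x => MvPolynomial.X (Sum.inl x)).prod *
    (if T.1 = 0 then 1 else MvPolynomial.X (Sum.inr T.1))

/-- `Ψ` on monomials of `K[T_{ij}]`. -/
noncomputable def Psi {s : ℕ} {ni : Fin (s + 1) → ℕ} (K : Type*) [Field K]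
    (U : (i : Fin (s + 1)) → Fin (ni i) → Multiset ℕ) (m : Multiset (TVar s ni)) :
    MvPolynomial (ℕ ⊕ Fin (s + 1)) K :=
  (m.map (PsiT K U)).prod

/-- A monomial `m` of `K[T_{ij}]` is completely reduced iff `c_m = e_m = 0`;
equivalently (given closure under comparability), any two of its `T`-variable
factors correspond to comparable monomials.  Here we use the latter description. -/
def CompletelyReduced {s : ℕ} {ni : Fin (s + 1) → ℕ}
    (U : (i : Fin (s + 1)) → Fin (ni i) → Multiset ℕ) (m : Multiset (TVar s ni)) : Prop :=
  ∀ a ∈ m, ∀ b ∈ m, a ≠ b → prec U a b ∨ prec U b a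

/-!
`Ψ(m)` records the multiset of all variable indices occurring in the `u_{ij}` of `m`, together
with the number of factors of each level `i ≥ 1`. If `m` is completely reduced, `ord` puts every
index of a higher level before every index of a lower one, so the sorted index list of `Ψ(m)` is
a concatenation of level blocks whose lengths are read off from the `t`-exponents (and, for
level `0`, from `d₀ = 1`). Inside a level, `sort` makes the rows of the matrix of the `u_{ij}`
interleave, so the `q`-th column is the `q`-th stretch of the sorted block; the rows form a
chain for the componentwise order and are therefore recovered from the columns. The `u_{ij}` of
a level are strictly rev-lex ordered, hence distinct, and `m` is recovered.
-/

namespace Multiset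

theorem eq_of_map_eq_of_injOn {α β : Type*} {f : α → β} {s t : Multiset α}
    (hf : Set.InjOn f {x | x ∈ s + t}) (h : s.map f = t.map f) : s = t := by
  classical
  ext x
  by_cases hx : x ∈ s + t
  · have key : ∀ r ≤ s + t, count x r = count (f x) (r.map f) := fun r hr => by
      rw [count_map, count_eq_card_filter_eq]
      congr 1
      exact filter_congr fun y hy => ⟨congrArg f, fun hxy => hf hx (mem_of_le hr hy) hxy⟩
    rw [key s (le_add_right s t), key t (le_add_left t s), h]
  · rw [mem_add, not_or] at hx
    rw [count_eq_zero_of_notMem hx.1, count_eq_zero_of_notMem hx.2]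

theorem disjSum_inj {α β : Type*} {s s' : Multiset α} {t t' : Multiset β} :
    s.disjSum t = s'.disjSum t' ↔ s = s' ∧ t = t' := by
  classical
  have hl : ∀ (s : Multiset α) (t : Multiset β) a, count (Sum.inl a) (s.disjSum t) = count a s :=
    fun s t a => by
      rw [disjSum, count_add, count_map_eq_count' _ _ Sum.inl_injective,
        count_eq_zero_of_notMem (s := map Sum.inr t) (by simp), add_zero]
  have hr : ∀ (s : Multiset α) (t : Multiset β) b, count (Sum.inr b) (s.disjSum t) = count b t :=
    fun s t b => by
      rw [disjSum, count_add, count_map_eq_count' _ _ Sum.inr_injective,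
        count_eq_zero_of_notMem (s := map Sum.inl s) (by simp), zero_add]
  refine ⟨fun h => ⟨ext.2 fun a => ?_, ext.2 fun b => ?_⟩, fun h => h.1 ▸ h.2 ▸ rfl⟩
  · rw [← hl s t, ← hl s' t', h]
  · rw [← hr s t, ← hr s' t', h]

theorem disjSum_add_disjSum {α β : Type*} (s s' : Multiset α) (t t' : Multiset β) :
    s.disjSum t + s'.disjSum t' = (s + s').disjSum (t + t') := by
  simp only [disjSum, map_add]
  abel

theorem exists_forall_le_of_isChain {β : Type*} [PartialOrder β] {F : Multiset β}
    (hF : ∀ f ∈ F, ∀ g ∈ F, f ≤ g ∨ g ≤ f) (h0 : F ≠ 0) : ∃ f ∈ F, ∀ g ∈ F, g ≤ f := by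
  classical
  obtain ⟨f, hf⟩ := Finset.exists_maximal (s := F.toFinset) (by simpa using h0)
  have hfF : f ∈ F := by simpa using hf.prop
  refine ⟨f, hfF, fun g hg => (hF g hg f hfF).elim id fun hfg => ?_⟩
  exact hf.le_of_ge (by simpa using hg) hfg

theorem eq_of_map_eval_eq_of_isChain {ι β : Type*} [Nonempty ι] [LinearOrder β]
    {F G : Multiset (ι → β)} (hF : ∀ f ∈ F, ∀ g ∈ F, f ≤ g ∨ g ≤ f)
    (hG : ∀ f ∈ G, ∀ g ∈ G, f ≤ g ∨ g ≤ f) (h : ∀ i, F.map (· i) = G.map (· i)) : F = G := by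
  classical
  induction hn : card F generalizing F G with
  | zero =>
    have i := Classical.arbitrary ι
    have := congrArg card (h i)
    rw [card_map, card_map, hn, eq_comm, card_eq_zero] at this
    rw [card_eq_zero.1 hn, this]
  | succ n ih =>
    have hG0 : G ≠ 0 := by
      rintro rfl
      simpa [hn] using congrArg card (h (Classical.arbitrary ι))
    obtain ⟨f, hfF, hfmax⟩ := exists_forall_le_of_isChain hF (by rintro rfl; simp at hn)
    obtain ⟨g, hgG, hgmax⟩ := exists_forall_le_of_isChain hG hG0
    have hfg : f = g := funext fun i => by
      obtain ⟨g', hg', hg'i⟩ := mem_map.1 (h i ▸ mem_map_of_mem (fun f : ι → β => f i) hfF)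
      obtain ⟨f', hf', hf'i⟩ := mem_map.1 ((h i).symm ▸ mem_map_of_mem (fun f : ι → β => f i) hgG)
      exact le_antisymm (hg'i ▸ hgmax g' hg' i) (hf'i ▸ hfmax f' hf' i)
    subst hfg
    rw [← cons_erase hfF, ← cons_erase hgG, ih (fun a ha b hb => hF a (mem_of_mem_erase ha) b
      (mem_of_mem_erase hb)) (fun a ha b hb => hG a (mem_of_mem_erase ha) b (mem_of_mem_erase hb))
      (fun i => by rw [map_erase_of_mem _ _ hfF, map_erase_of_mem _ _ hgG, h i])
      (by rw [card_erase_of_mem hfF, hn]; rfl)]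

section Sorting

variable {α : Type*} [LinearOrder α]

theorem sort_add_of_forall_le {s t : Multiset α} (h : ∀ a ∈ s, ∀ b ∈ t, a ≤ b) :
    (s + t).sort (· ≤ ·) = s.sort (· ≤ ·) ++ t.sort (· ≤ ·) := by
  have hst : s + t = ↑(s.sort (· ≤ ·) ++ t.sort (· ≤ ·)) := by rw [← coe_add, sort_eq, sort_eq]
  rw [hst, coe_sort]
  exact List.mergeSort_eq_self _ (List.pairwise_append.2 ⟨pairwise_sort _ _,
    pairwise_sort _ _, fun a ha b hb => h a ((mem_sort _).1 ha) b ((mem_sort _).1 hb)⟩)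

theorem coe_take_card_sort_add {s t : Multiset α} (h : ∀ a ∈ s, ∀ b ∈ t, a ≤ b) :
    (((s + t).sort (· ≤ ·) |>.take (card s) : List α) : Multiset α) = s := by
  rw [sort_add_of_forall_le h, List.take_left' (length_sort _), sort_eq]

end Sorting

end Multiset

theorem List.eq_of_sum_eq_of_pairwise_le {α : Type*} [LinearOrder α] {B C : List (Multiset α)}
    (hB : B.Pairwise fun s t => ∀ a ∈ s, ∀ b ∈ t, a ≤ b)
    (hC : C.Pairwise fun s t => ∀ a ∈ s, ∀ b ∈ t, a ≤ b)
    (hcard : B.map Multiset.card = C.map Multiset.card) (hsum : B.sum = C.sum) : B = C := by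
  induction B generalizing C with
  | nil => exact (List.map_eq_nil_iff.1 hcard.symm).symm
  | cons b B ih =>
    obtain _ | ⟨c, C⟩ := C
    · simp at hcard
    simp only [List.map_cons, List.cons.injEq] at hcard
    simp only [List.sum_cons] at hsum
    rw [List.pairwise_cons] at hB hC
    have below : ∀ {b : Multiset α} {B : List (Multiset α)},
        (∀ t ∈ B, ∀ a ∈ b, ∀ x ∈ t, a ≤ x) → ∀ a ∈ b, ∀ x ∈ B.sum, a ≤ x := by
      intro b B h a ha x hx
      obtain ⟨t, ht, hxt⟩ := Multiset.mem_join.1 (show x ∈ Multiset.join (B : Multiset (Multiset α))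
        by rwa [Multiset.join, Multiset.sum_coe])
      exact h t ht a ha x hxt
    have hbc : b = c := by
      rw [← Multiset.coe_take_card_sort_add (below hB.1),
        ← Multiset.coe_take_card_sort_add (below hC.1), hsum, hcard.1]
    subst hbc
    rw [ih hB.2 hC.2 hcard.2 (add_left_cancel hsum)]

theorem List.getD_le_getD_of_pairwise {α : Type*} [LinearOrder α] {l : List α} {a : α}
    (hl : l.Pairwise (· ≤ ·)) {p q : ℕ} (hpq : p ≤ q) (hq : q < l.length) :
    l.getD p a ≤ l.getD q a := by
  rw [List.getD_eq_getElem _ _ (hpq.trans_lt hq), List.getD_eq_getElem _ _ hq]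
  obtain hpq | rfl := hpq.lt_or_eq
  · exact List.pairwise_iff_getElem.1 hl p q _ hq hpq
  · exact le_rfl

theorem MvPolynomial.prod_map_X {σ R : Type*} [CommSemiring R] [DecidableEq σ] (t : Multiset σ) :
    (t.map fun v => (MvPolynomial.X v : MvPolynomial σ R)).prod =
      MvPolynomial.monomial (Multiset.toFinsupp t) 1 := by
  induction t using Multiset.induction with
  | empty => simp
  | cons a t ih =>
    rw [Multiset.map_cons, Multiset.prod_cons, ih, ← Multiset.singleton_add,
      Multiset.toFinsupp_add, Multiset.toFinsupp_singleton, MvPolynomial.X,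
      MvPolynomial.monomial_mul, one_mul]

theorem evens_cons (a : ℕ) (l : List ℕ) : evens (a :: l) = a :: odds l := by
  rw [evens, odds, List.length_cons, List.range_succ_eq_map, List.zip_cons_cons,
    List.zip_map_left, List.filter_cons_of_pos rfl, List.filter_map, List.map_cons, List.map_map]
  congr 1
  exact congrArg _ (List.filter_congr fun p _ => by simp; omega)

theorem odds_cons (a : ℕ) (l : List ℕ) : odds (a :: l) = evens l := by
  rw [evens, odds, List.length_cons, List.range_succ_eq_map, List.zip_cons_cons,
    List.zip_map_left, List.filter_cons_of_neg (by simp), List.filter_map, List.map_map]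
  exact congrArg _ (List.filter_congr fun p _ => by simp; omega)

theorem getD_evens_odds (l : List ℕ) (q : ℕ) :
    (evens l).getD q 0 = l.getD (2 * q) 0 ∧ (odds l).getD q 0 = l.getD (2 * q + 1) 0 := by
  induction l generalizing q with
  | nil => simp [evens, odds]
  | cons a l ih =>
    rw [evens_cons, odds_cons]
    cases q with
    | zero => simpa using (ih 0).1
    | succ q => simpa [Nat.mul_succ] using ⟨(ih q).2, (ih (q + 1)).1⟩

theorem evens_sublist (l : List ℕ) : (evens l).Sublist l := by
  conv_rhs => rw [← List.map_snd_zip (l₁ := List.range l.length) (l₂ := l) (by simp)]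
  exact List.filter_sublist.map _

theorem odds_sublist (l : List ℕ) : (odds l).Sublist l := by
  conv_rhs => rw [← List.map_snd_zip (l₁ := List.range l.length) (l₂ := l) (by simp)]
  exact List.filter_sublist.map _

theorem stdList_pairwise (u : Multiset ℕ) : (stdList u).Pairwise (· ≤ ·) :=
  Multiset.pairwise_sort _ _

theorem stdList_length (u : Multiset ℕ) : (stdList u).length = Multiset.card u :=
  Multiset.length_sort _

theorem stdList_coe_of_pairwise {l : List ℕ} (hl : l.Pairwise (· ≤ ·)) : stdList l = l := by
  rw [stdList, Multiset.coe_sort, List.mergeSort_eq_self _ hl]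

theorem stdList_eq_evens_odds_of_sortPair_eq {u v : Multiset ℕ} (h : sortPair u v = (u, v)) :
    stdList u = evens (stdList (u + v)) ∧ stdList v = odds (stdList (u + v)) := by
  constructor
  · have hu : (sortPair u v).1 = u := congrArg Prod.fst h
    conv_lhs => rw [← hu]
    exact stdList_coe_of_pairwise ((stdList_pairwise _).sublist (evens_sublist _))
  · have hv : (sortPair u v).2 = v := congrArg Prod.snd h
    conv_lhs => rw [← hv]
    exact stdList_coe_of_pairwise ((stdList_pairwise _).sublist (odds_sublist _))

theorem le_of_ordPair_eq {u v : Multiset ℕ} (h : ordPair u v = (u, v)) :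
    ∀ a ∈ v, ∀ b ∈ u, a ≤ b := by
  have hu : (ordPair u v).1 = u := congrArg Prod.fst h
  have hv : (ordPair u v).2 = v := congrArg Prod.snd h
  have hsplit := stdList_pairwise (u + v)
  rw [← List.take_append_drop (Multiset.card v) (stdList (u + v))] at hsplit
  intro a ha b hb
  rw [← hv] at ha
  rw [← hu] at hb
  exact (List.pairwise_append.1 hsplit).2.2 a ha b hb

theorem revGtM_irrefl (u : Multiset ℕ) : ¬ revGtM u u :=
  fun ⟨_, hlt, _⟩ => lt_irrefl _ hlt

namespace MultiRees

/-- Entry `q` of the row `u` of the paper's matrix (`0` once `q ≥ deg u`). -/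
def entry (u : Multiset ℕ) (q : ℕ) : ℕ := (stdList u).getD q 0

theorem entry_mono {u : Multiset ℕ} {p q : ℕ} (hpq : p ≤ q) (hq : q < Multiset.card u) :
    entry u p ≤ entry u q :=
  List.getD_le_getD_of_pairwise (stdList_pairwise u) hpq (by rwa [stdList_length])

theorem entry_of_card_le {u : Multiset ℕ} {q : ℕ} (hq : Multiset.card u ≤ q) : entry u q = 0 :=
  List.getD_eq_default _ _ (by rwa [stdList_length])

theorem map_entry_range (u : Multiset ℕ) :
    (List.range (Multiset.card u)).map (entry u) = stdList u :=
  List.ext_getElem (by simp [stdList_length]) fun q _ hq => by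
    simp [entry, List.getElem?_eq_getElem hq]

theorem eq_of_entry_eq {u v : Multiset ℕ} (hc : Multiset.card u = Multiset.card v)
    (h : entry u = entry v) : u = v := by
  rw [← Multiset.sort_eq u (· ≤ ·), ← Multiset.sort_eq v (· ≤ ·)]
  change ((stdList u : List ℕ) : Multiset ℕ) = stdList v
  rw [← map_entry_range, ← map_entry_range, hc, h]

theorem sum_map_entry_range {F : Multiset (Multiset ℕ)} {d : ℕ}
    (hF : ∀ u ∈ F, Multiset.card u = d) :
    ((List.range d).map fun q => F.map (entry · q)).sum = F.sum := by
  induction F using Multiset.induction with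
  | empty => simp
  | cons u F ih =>
    have hrow : ((List.range d).map fun q => ({entry u q} : Multiset ℕ)).sum = u :=
      calc ((List.range d).map fun q => ({entry u q} : Multiset ℕ)).sum
          = (((List.range d).map (entry u)).map fun a => ({a} : Multiset ℕ)).sum := by
            rw [List.map_map]; rfl
        _ = u := by
            rw [← Multiset.sum_coe, ← Multiset.map_coe, Multiset.sum_map_singleton,
              ← hF u (Multiset.mem_cons_self u F), map_entry_range]
            exact Multiset.sort_eq u _
    calc ((List.range d).map fun q => (u ::ₘ F).map (entry · q)).sum
        = ((List.range d).map fun q => ({entry u q} : Multiset ℕ)).sum +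
            ((List.range d).map fun q => F.map (entry · q)).sum := by
          simp only [← Multiset.singleton_add, Multiset.map_add, Multiset.map_singleton,
            List.sum_map_add]
      _ = (u ::ₘ F).sum := by
          rw [hrow, ih fun v hv => hF v (Multiset.mem_cons_of_mem hv), Multiset.sum_cons]

theorem entry_le_of_sortPair_eq {u v : Multiset ℕ} (hc : Multiset.card u = Multiset.card v)
    (h : sortPair u v = (u, v)) :
    (∀ q, entry u q ≤ entry v q) ∧
      ∀ p q, p < q → q < Multiset.card u → entry v p ≤ entry u q := by
  have hL : (stdList (u + v)).length = 2 * Multiset.card u := by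
    rw [stdList_length, Multiset.card_add, hc]; ring
  obtain ⟨hu, hv⟩ := stdList_eq_evens_odds_of_sortPair_eq h
  have heu : ∀ q, entry u q = (stdList (u + v)).getD (2 * q) 0 := fun q => by
    rw [entry, hu]; exact (getD_evens_odds _ q).1
  have hev : ∀ q, entry v q = (stdList (u + v)).getD (2 * q + 1) 0 := fun q => by
    rw [entry, hv]; exact (getD_evens_odds _ q).2
  refine ⟨fun q => ?_, fun p q hpq hq => ?_⟩
  · by_cases hq : q < Multiset.card u
    · rw [heu, hev]
      exact List.getD_le_getD_of_pairwise (stdList_pairwise _) (by omega) (by omega)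
    · rw [entry_of_card_le (by omega), entry_of_card_le (by omega)]
  · rw [heu, hev]
    exact List.getD_le_getD_of_pairwise (stdList_pairwise _) (by omega) (by omega)

def SortChain (F : Multiset (Multiset ℕ)) : Prop :=
  ∀ u ∈ F, ∀ v ∈ F, u = v ∨ sortPair u v = (u, v) ∨ sortPair v u = (v, u)

namespace SortChain

variable {F G : Multiset (Multiset ℕ)} {d : ℕ}

theorem entry_le_or_le (hF : SortChain F) (hd : ∀ u ∈ F, Multiset.card u = d) {u v : Multiset ℕ}
    (hu : u ∈ F) (hv : v ∈ F) : entry u ≤ entry v ∨ entry v ≤ entry u := by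
  have hc : Multiset.card u = Multiset.card v := by rw [hd u hu, hd v hv]
  rcases hF u hu v hv with rfl | h | h
  · exact Or.inl le_rfl
  · exact Or.inl (entry_le_of_sortPair_eq hc h).1
  · exact Or.inr (entry_le_of_sortPair_eq hc.symm h).1

theorem entry_le_entry (hF : SortChain F) (hd : ∀ u ∈ F, Multiset.card u = d) {p q : ℕ}
    (hpq : p < q) (hq : q < d) {u v : Multiset ℕ} (hu : u ∈ F) (hv : v ∈ F) :
    entry u p ≤ entry v q := by
  have hc : Multiset.card u = Multiset.card v := by rw [hd u hu, hd v hv]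
  rcases hF u hu v hv with rfl | h | h
  · exact entry_mono hpq.le (by rwa [hd u hu])
  · calc entry u p ≤ entry v p := (entry_le_of_sortPair_eq hc h).1 p
      _ ≤ entry v q := entry_mono hpq.le (by rwa [hd v hv])
  · exact (entry_le_of_sortPair_eq hc.symm h).2 p q hpq (by rwa [hd v hv])

theorem pairwise_columns (hF : SortChain F) (hd : ∀ u ∈ F, Multiset.card u = d) :
    ((List.range d).map fun q => F.map (entry · q)).Pairwise
      fun s t => ∀ a ∈ s, ∀ b ∈ t, a ≤ b := by
  refine List.pairwise_map.2 (List.pairwise_lt_range.imp_of_mem fun _ hq hpq => ?_)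
  simp only [Multiset.mem_map]
  rintro _ ⟨u, hu, rfl⟩ _ ⟨v, hv, rfl⟩
  exact hF.entry_le_entry hd hpq (List.mem_range.1 hq) hu hv

theorem map_entry_eq_of_sum_eq (hF : SortChain F) (hG : SortChain G)
    (hFd : ∀ u ∈ F, Multiset.card u = d) (hGd : ∀ u ∈ G, Multiset.card u = d)
    (hcard : Multiset.card F = Multiset.card G) (hsum : F.sum = G.sum) (q : ℕ) :
    F.map (entry · q) = G.map (entry · q) := by
  by_cases hq : q < d
  · have hcols := List.eq_of_sum_eq_of_pairwise_le (hF.pairwise_columns hFd)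
      (hG.pairwise_columns hGd) (by simp [Function.comp_def, hcard])
      (by rw [sum_map_entry_range hFd, sum_map_entry_range hGd, hsum])
    exact List.map_inj_left.1 hcols q (List.mem_range.2 hq)
  · have hzero : ∀ {H : Multiset (Multiset ℕ)}, (∀ u ∈ H, Multiset.card u = d) →
        H.map (entry · q) = Multiset.replicate (Multiset.card H) 0 := fun hH => by
      rw [← Multiset.map_const', Multiset.map_congr rfl fun u hu =>
        entry_of_card_le (by rw [hH u hu]; omega)]
    rw [hzero hFd, hzero hGd, hcard]

theorem eq_of_sum_eq (hF : SortChain F) (hG : SortChain G)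
    (hFd : ∀ u ∈ F, Multiset.card u = d) (hGd : ∀ u ∈ G, Multiset.card u = d)
    (hcard : Multiset.card F = Multiset.card G) (hsum : F.sum = G.sum) : F = G := by
  have hd : ∀ u ∈ F + G, Multiset.card u = d := fun u hu =>
    (Multiset.mem_add.1 hu).elim (hFd u) (hGd u)
  refine Multiset.eq_of_map_eq_of_injOn (f := entry)
    (fun u hu v hv huv => eq_of_entry_eq (by rw [hd u hu, hd v hv]) huv)
    (Multiset.eq_of_map_eval_eq_of_isChain ?_ ?_ fun q => ?_)
  · simp only [Multiset.mem_map]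
    rintro _ ⟨u, hu, rfl⟩ _ ⟨v, hv, rfl⟩
    exact hF.entry_le_or_le hFd hu hv
  · simp only [Multiset.mem_map]
    rintro _ ⟨u, hu, rfl⟩ _ ⟨v, hv, rfl⟩
    exact hG.entry_le_or_le hGd hu hv
  · simpa only [Multiset.map_map, Function.comp_def] using
      hF.map_entry_eq_of_sum_eq hG hFd hGd hcard hsum q

end SortChain

section Levels

variable {s : ℕ} {ni : Fin (s + 1) → ℕ} (U : (i : Fin (s + 1)) → Fin (ni i) → Multiset ℕ)

def xPart (m : Multiset (TVar s ni)) : Multiset ℕ :=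
  (m.map fun T => U T.1 T.2).sum

/-- The `t`-exponent of `Ψ(m)` as a multiset of levels; level `0` leaves no trace since
`t₀ = 1`. -/
def tPart (m : Multiset (TVar s ni)) : Multiset (Fin (s + 1)) :=
  (m.map fun T => T.1).filter (· ≠ 0)

def rowsAt (i : Fin (s + 1)) (m : Multiset (TVar s ni)) : Multiset (Multiset ℕ) :=
  (m.filter fun T => T.1 = i).map fun T => U T.1 T.2

def xFrom (k : ℕ) (m : Multiset (TVar s ni)) : Multiset ℕ :=
  ((m.filter fun T => k ≤ (T.1 : ℕ)).map fun T => U T.1 T.2).sum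

variable {U} in
theorem xPart_cons (T : TVar s ni) (m : Multiset (TVar s ni)) :
    xPart U (T ::ₘ m) = U T.1 T.2 + xPart U m := by
  rw [xPart, Multiset.map_cons, Multiset.sum_cons, xPart]

theorem tPart_cons (T : TVar s ni) (m : Multiset (TVar s ni)) :
    tPart (T ::ₘ m) = (if T.1 ≠ 0 then {T.1} else 0) + tPart m := by
  rw [tPart, Multiset.map_cons, Multiset.filter_cons, tPart]

theorem Psi_eq_monomial (K : Type*) [Field K] (m : Multiset (TVar s ni)) :
    Psi K U m = MvPolynomial.monomial (Multiset.toFinsupp ((xPart U m).disjSum (tPart m))) 1 := by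
  induction m using Multiset.induction with
  | empty => simp [Psi, xPart, tPart]
  | cons T m ih =>
    have hT : PsiT K U T = MvPolynomial.monomial (Multiset.toFinsupp
        ((U T.1 T.2).disjSum (if T.1 ≠ 0 then {T.1} else 0))) 1 := by
      rw [← MvPolynomial.prod_map_X, Multiset.disjSum, Multiset.map_add, Multiset.prod_add,
        Multiset.map_map, Multiset.map_map, PsiT]
      by_cases h : T.1 = 0 <;> simp [h]
    rw [Psi, Multiset.map_cons, Multiset.prod_cons, ← Psi, ih, hT, MvPolynomial.monomial_mul,
      one_mul, ← Multiset.toFinsupp_add, Multiset.disjSum_add_disjSum, xPart_cons, tPart_cons]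

theorem xPart_eq_and_tPart_eq_of_Psi_eq (K : Type*) [Field K] {m m' : Multiset (TVar s ni)}
    (h : Psi K U m = Psi K U m') : xPart U m = xPart U m' ∧ tPart m = tPart m' := by
  rwa [Psi_eq_monomial, Psi_eq_monomial, MvPolynomial.monomial_left_inj one_ne_zero,
    Multiset.toFinsupp.injective.eq_iff, Multiset.disjSum_inj] at h

theorem linearIndependent_Psi (K : Type*) [Field K] {p : Multiset (TVar s ni) → Prop}
    (h : Set.InjOn (Psi K U) {m | p m}) :
    LinearIndependent K fun m : {m // p m} => Psi K U m.val := by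
  have hPsi : (fun m : {m // p m} => Psi K U m.val) = MvPolynomial.basisMonomials _ K ∘
      fun m => Multiset.toFinsupp ((xPart U m.val).disjSum (tPart m.val)) := by
    funext m
    rw [Function.comp_apply, MvPolynomial.coe_basisMonomials, Psi_eq_monomial]
  rw [hPsi]
  exact (MvPolynomial.basisMonomials _ K).linearIndependent.comp _ fun a b hab =>
    Subtype.ext (h a.2 b.2 (by rw [Psi_eq_monomial, Psi_eq_monomial, hab]))

variable {U} {m : Multiset (TVar s ni)}

theorem xFrom_zero : xFrom U 0 m = xPart U m := by
  rw [xFrom, Multiset.filter_eq_self.2 fun T _ => Nat.zero_le _, xPart]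

theorem xFrom_eq_sum_rowsAt_add (i : Fin (s + 1)) :
    xFrom U i m = (rowsAt U i m).sum + xFrom U (i + 1) m := by
  have hsplit : m.filter (fun T => (i : ℕ) ≤ T.1) =
      m.filter (fun T => T.1 = i) + m.filter (fun T => (i : ℕ) + 1 ≤ T.1) := by
    rw [← Multiset.filter_add_not (fun T : TVar s ni => T.1 = i)
      (m.filter fun T => (i : ℕ) ≤ T.1), Multiset.filter_filter, Multiset.filter_filter]
    congr 1 <;> refine Multiset.filter_congr fun T _ => ?_ <;> simp only [Fin.ext_iff] <;> omega
  rw [xFrom, hsplit, Multiset.map_add, Multiset.sum_add, rowsAt, xFrom]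

theorem xPart_eq_xFrom_add (k : ℕ) :
    xPart U m = xFrom U k m + ((m.filter fun T => ¬ k ≤ (T.1 : ℕ)).map fun T => U T.1 T.2).sum := by
  rw [xFrom, ← Multiset.sum_add, ← Multiset.map_add, Multiset.filter_add_not, xPart]

theorem card_xFrom_succ {d : Fin (s + 1) → ℕ} (hcard : ∀ i j, Multiset.card (U i j) = d i)
    (k : ℕ) : Multiset.card (xFrom U (k + 1) m) =
      (((tPart m).filter fun i : Fin (s + 1) => k + 1 ≤ (i : ℕ)).map d).sum := by
  have hlevels : (tPart m).filter (fun i : Fin (s + 1) => k + 1 ≤ (i : ℕ)) =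
      (m.filter fun T => k + 1 ≤ (T.1 : ℕ)).map fun T => T.1 := by
    rw [tPart, Multiset.filter_filter, Multiset.filter_map]
    refine congrArg _ (Multiset.filter_congr fun T _ => ?_)
    simp only [Function.comp_apply, ne_eq, Fin.ext_iff, Fin.val_zero]
    omega
  change Multiset.card (Multiset.join _) = _
  rw [Multiset.card_join, hlevels, Multiset.map_map, Multiset.map_map]
  exact congrArg _ (Multiset.map_congr rfl fun T _ => hcard _ _)

theorem card_sum_rowsAt {d : Fin (s + 1) → ℕ} (hcard : ∀ i j, Multiset.card (U i j) = d i)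
    (i : Fin (s + 1)) : Multiset.card (rowsAt U i m).sum = Multiset.card (rowsAt U i m) * d i := by
  change Multiset.card (Multiset.join _) = _
  rw [Multiset.card_join, rowsAt, Multiset.map_map, Multiset.card_map,
    Multiset.map_congr rfl fun T hT => by
      rw [Function.comp_apply, hcard, (Multiset.mem_filter.1 hT).2],
    Multiset.map_const', Multiset.sum_replicate, smul_eq_mul]

theorem card_rowsAt_of_ne_zero {i : Fin (s + 1)} (hi : i ≠ 0) :
    Multiset.card (rowsAt U i m) = (tPart m).count i := by
  rw [tPart, Multiset.count_filter_of_pos (p := fun x => x ≠ 0) (a := i) hi, Multiset.count_map,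
    rowsAt, Multiset.card_map]
  simp only [eq_comm]

theorem card_of_mem_rowsAt {d : Fin (s + 1) → ℕ} (hcard : ∀ i j, Multiset.card (U i j) = d i)
    {i : Fin (s + 1)} {u : Multiset ℕ} (hu : u ∈ rowsAt U i m) : Multiset.card u = d i := by
  obtain ⟨T, hT, rfl⟩ := Multiset.mem_map.1 hu
  rw [hcard, (Multiset.mem_filter.1 hT).2]

end Levels

end MultiRees

namespace CompletelyReduced

open MultiRees

variable {s : ℕ} {ni : Fin (s + 1) → ℕ} {U : (i : Fin (s + 1)) → Fin (ni i) → Multiset ℕ}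
  {m m' : Multiset (TVar s ni)}

theorem le_of_fst_lt (hm : CompletelyReduced U m) {T T' : TVar s ni} (hT : T ∈ m) (hT' : T' ∈ m)
    (hlt : T.1 < T'.1) : ∀ a ∈ U T'.1 T'.2, ∀ b ∈ U T.1 T.2, a ≤ b := by
  rcases hm T hT T' hT' (by rintro rfl; exact lt_irrefl _ hlt) with
    (⟨-, h⟩ | ⟨h, -⟩) | (⟨h, -⟩ | ⟨h, -⟩)
  · exact le_of_ordPair_eq h
  · exact absurd h hlt.ne
  · exact absurd h hlt.not_gt
  · exact absurd h hlt.ne'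

theorem xFrom_eq_take (hm : CompletelyReduced U m) (k : ℕ) :
    xFrom U k m = ((stdList (xPart U m)).take (Multiset.card (xFrom U k m)) : List ℕ) := by
  rw [xPart_eq_xFrom_add k]
  refine (Multiset.coe_take_card_sort_add fun a ha b hb => ?_).symm
  obtain ⟨T', hT', ha⟩ := Multiset.mem_bind.1 (ha : a ∈ Multiset.bind _ _)
  obtain ⟨T, hT, hb⟩ := Multiset.mem_bind.1 (hb : b ∈ Multiset.bind _ _)
  rw [Multiset.mem_filter] at hT hT'
  exact hm.le_of_fst_lt hT.1 hT'.1 (by rw [Fin.lt_def]; omega) a ha b hb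

theorem sortChain_rowsAt (hm : CompletelyReduced U m) (i : Fin (s + 1)) :
    SortChain (rowsAt U i m) := by
  simp only [SortChain, rowsAt, Multiset.mem_map, Multiset.mem_filter]
  rintro _ ⟨T, ⟨hT, hTi⟩, rfl⟩ _ ⟨T', ⟨hT', hT'i⟩, rfl⟩
  by_cases hTT' : T = T'
  · exact Or.inl (hTT' ▸ rfl)
  rcases hm T hT T' hT' hTT' with (⟨h, -⟩ | ⟨-, h⟩) | (⟨h, -⟩ | ⟨-, h⟩)
  · exact absurd h (by rw [hTi, hT'i]; exact lt_irrefl i)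
  · exact Or.inr (Or.inl h)
  · exact absurd h (by rw [hTi, hT'i]; exact lt_irrefl i)
  · exact Or.inr (Or.inr h)

theorem eq_of_xPart_eq_of_tPart_eq {d : Fin (s + 1) → ℕ} (hd0 : d 0 = 1)
    (hcard : ∀ i j, Multiset.card (U i j) = d i) (hU : ∀ i, Function.Injective (U i))
    (hm : CompletelyReduced U m) (hm' : CompletelyReduced U m')
    (hx : xPart U m = xPart U m') (ht : tPart m = tPart m') : m = m' := by
  have hfrom : ∀ k, xFrom U k m = xFrom U k m'
    | 0 => by rw [xFrom_zero, xFrom_zero, hx]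
    | k + 1 => by
      rw [hm.xFrom_eq_take, hm'.xFrom_eq_take, hx, card_xFrom_succ hcard, card_xFrom_succ hcard, ht]
  have hsum : ∀ i, (rowsAt U i m).sum = (rowsAt U i m').sum := fun i =>
    add_right_cancel (b := xFrom U (i + 1) m) (by
      rw [← xFrom_eq_sum_rowsAt_add, hfrom, hfrom, xFrom_eq_sum_rowsAt_add])
  have hcount : ∀ i, Multiset.card (rowsAt U i m) = Multiset.card (rowsAt U i m') := by
    intro i
    by_cases hi : i = 0
    · -- level `0` carries no `t`-variable: count its rows through `d 0 = 1` instead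
      subst hi
      simpa only [card_sum_rowsAt hcard, hd0, mul_one] using congrArg Multiset.card (hsum 0)
    · rw [card_rowsAt_of_ne_zero hi, card_rowsAt_of_ne_zero hi, ht]
  have hrows : ∀ i, rowsAt U i m = rowsAt U i m' := fun i =>
    (hm.sortChain_rowsAt i).eq_of_sum_eq (hm'.sortChain_rowsAt i)
      (fun _ => card_of_mem_rowsAt hcard) (fun _ => card_of_mem_rowsAt hcard) (hcount i) (hsum i)
  have hlevel : ∀ i, m.filter (fun T => T.1 = i) = m'.filter (fun T => T.1 = i) := by
    intro i
    refine Multiset.eq_of_map_eq_of_injOn ?_ (hrows i)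
    rintro ⟨i₁, j₁⟩ h₁ ⟨i₂, j₂⟩ h₂ h
    simp only [Multiset.mem_add, Multiset.mem_filter] at h₁ h₂
    obtain rfl : i₁ = i := h₁.elim (·.2) (·.2)
    obtain rfl : i₂ = i₁ := h₂.elim (·.2) (·.2)
    exact congrArg _ (hU _ h)
  ext T
  simpa [Multiset.count_filter] using congrArg (Multiset.count T) (hlevel T.1)

end CompletelyReduced

theorem Psi_injOn_completely_reduced_general {s : ℕ} {ni : Fin (s + 1) → ℕ}
    (K : Type*) [Field K]
    (U : (i : Fin (s + 1)) → Fin (ni i) → Multiset ℕ) (d : Fin (s + 1) → ℕ)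
    (hd0 : d 0 = 1)
    (hcard : ∀ i j, Multiset.card (U i j) = d i)
    (hrev : ∀ i (j j' : Fin (ni i)), j < j' → revGtM (U i j) (U i j')) :
    Set.InjOn (Psi K U) { m | CompletelyReduced U m } ∧
    LinearIndependent K
      (fun m : { m : Multiset (TVar s ni) // CompletelyReduced U m } => Psi K U m.val) := by
  have hU : ∀ i, Function.Injective (U i) := fun i =>
    Function.Injective.of_lt_imp_ne fun j j' hjj' hEq => revGtM_irrefl _ (hEq ▸ hrev i j j' hjj')
  have hinj : Set.InjOn (Psi K U) { m | CompletelyReduced U m } := fun m hm m' hm' h =>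
    let ⟨hx, ht⟩ := MultiRees.xPart_eq_and_tPart_eq_of_Psi_eq U K h
    hm.eq_of_xPart_eq_of_tPart_eq hd0 hcard hU hm' hx ht
  exact ⟨hinj, MultiRees.linearIndependent_Psi U K hinj⟩

/-- in the multi-Rees setup with `M` closed under comparability, `Ψ`
is injective on completely reduced monomials; consequently the images under `Ψ` of
the completely reduced monomials are linearly independent over `K`. -/
theorem Psi_injOn_completely_reduced {s n : ℕ} {ni : Fin (s + 1) → ℕ}
    (K : Type*) [Field K]
    (U : (i : Fin (s + 1)) → Fin (ni i) → Multiset ℕ) (d : Fin (s + 1) → ℕ)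
    (hd0 : d 0 = 1) (hdmono : Monotone d)
    (hcard : ∀ i j, Multiset.card (U i j) = d i)
    (hn0 : ni 0 = n) (hvar0 : ∀ j : Fin (ni 0), U 0 j = {(j : ℕ)})
    (hvars : ∀ i j, ∀ a ∈ U i j, a < n)
    (hrev : ∀ i (j j' : Fin (ni i)), j < j' → revGtM (U i j) (U i j'))
    (hOrd : ∀ (i i' : Fin (s + 1)) (j : Fin (ni i)) (j' : Fin (ni i')), i < i' →
      ∃ l l', ordPair (U i j) (U i' j') = (U i l, U i' l'))
    (hSort : ∀ (i : Fin (s + 1)) (j j' : Fin (ni i)),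
      ∃ l l', sortPair (U i j) (U i j') = (U i l, U i l')) :
    Set.InjOn (Psi K U) { m | CompletelyReduced U m } ∧
    LinearIndependent K
      (fun m : { m : Multiset (TVar s ni) // CompletelyReduced U m } => Psi K U m.val) :=
  Psi_injOn_completely_reduced_general K U d hd0 hcard hrev
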